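/- Let Z : I → S be a geodesic on a smooth surface S ⊂ ℝ³ with unit tangent T, let χ be a smooth deformation, and let z(s) = χ(Z(s)) be the convected curve. If 𝖢 is the pullback metric (𝖢 = F^T F restricted to S) and L is the third order tensor with components L_{αβδ} = (1/2)(∇_δ g_{αβ} + ∇_β g_{αδ} − ∇_α g_{βδ}), then 2 L[T⊗T⊗T] = d/ds |ż(s)|². -/

import Mathlib

/-- Partial derivative in the `α`-th coordinate direction of a function on `ℝ²`. -/
noncomputable def pd (α : Fin 2) (f : (Fin 2 → ℝ) → ℝ) (p : Fin 2 → ℝ) : ℝ :=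
  fderiv ℝ f p (Pi.single α 1)

/-- First fundamental form (induced metric) of a parameterized surface `Y : ℝ² → ℝ³`. -/
noncomputable def metricOf (Y : (Fin 2 → ℝ) → (Fin 3 → ℝ)) (p : Fin 2 → ℝ) :
    Matrix (Fin 2) (Fin 2) ℝ :=
  Matrix.of fun α β => ∑ i : Fin 3, pd α (fun q => Y q i) p * pd β (fun q => Y q i) p

/-- Christoffel symbols (second kind) of the induced metric of `Y`. -/
noncomputable def christoffel (Y : (Fin 2 → ℝ) → (Fin 3 → ℝ)) (p : Fin 2 → ℝ)
    (μ β δ : Fin 2) : ℝ :=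
  (1 / 2) * ∑ ν : Fin 2, (metricOf Y p)⁻¹ μ ν *
    (pd β (fun q => metricOf Y q ν δ) p + pd δ (fun q => metricOf Y q ν β) p
      - pd ν (fun q => metricOf Y q β δ) p)

/-- Covariant derivative `∇_δ g_{αβ}` of the pullback metric `g` with respect to the
Levi-Civita connection of the reference metric of `Y`. -/
noncomputable def covDerivMetric (Y : (Fin 2 → ℝ) → (Fin 3 → ℝ))
    (g : (Fin 2 → ℝ) → Matrix (Fin 2) (Fin 2) ℝ) (p : Fin 2 → ℝ) (α β δ : Fin 2) : ℝ :=
  pd δ (fun q => g q α β) p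
    - ∑ μ : Fin 2, christoffel Y p μ α δ * g p μ β
    - ∑ μ : Fin 2, christoffel Y p μ β δ * g p μ α

/-- The geodesic-distortion tensor `L_{αβδ} = (1/2)(∇_δ g_{αβ} + ∇_β g_{αδ} - ∇_α g_{βδ})`. -/
noncomputable def Ltensor (Y : (Fin 2 → ℝ) → (Fin 3 → ℝ))
    (g : (Fin 2 → ℝ) → Matrix (Fin 2) (Fin 2) ℝ) (p : Fin 2 → ℝ) (α β δ : Fin 2) : ℝ :=
  (1 / 2) * (covDerivMetric Y g p α β δ + covDerivMetric Y g p α δ β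
    - covDerivMetric Y g p β δ α)

lemma contDiff_pd {f : (Fin 2 → ℝ) → ℝ} (hf : ContDiff ℝ (⊤ : ℕ∞) f) (α : Fin 2) :
    ContDiff ℝ (↑(⊤:ℕ∞)) (pd α f) := by
  unfold pd
  exact (ContinuousLinearMap.apply ℝ ℝ (Pi.single α 1)).contDiff.comp
    (hf.fderiv_right (m := ((⊤ : ℕ∞) : WithTop ℕ∞)) (by exact_mod_cast (le_top : (⊤ : ℕ∞) + 1 ≤ ⊤)))

lemma contDiff_metric {Y' : (Fin 2 → ℝ) → Fin 3 → ℝ} (h : ContDiff ℝ (⊤ : ℕ∞) Y') (α β : Fin 2) :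
    ContDiff ℝ (↑(⊤:ℕ∞)) (fun q => metricOf Y' q α β) := by
  unfold metricOf
  simp only [Matrix.of_apply]
  exact ContDiff.sum fun i _ =>
    (contDiff_pd (contDiff_pi.mp h i) α).mul (contDiff_pd (contDiff_pi.mp h i) β)

lemma metric_symm (Y' : (Fin 2 → ℝ) → Fin 3 → ℝ) (q : Fin 2 → ℝ) (α β : Fin 2) :
    metricOf Y' q α β = metricOf Y' q β α := by
  unfold metricOf
  simp only [Matrix.of_apply]
  exact Finset.sum_congr rfl fun i _ => mul_comm _ _

lemma pd_metric_symm (Y' : (Fin 2 → ℝ) → Fin 3 → ℝ) (δ : Fin 2) (p : Fin 2 → ℝ)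
    (α β : Fin 2) :
    pd δ (fun q => metricOf Y' q α β) p = pd δ (fun q => metricOf Y' q β α) p := by
  have h : (fun q => metricOf Y' q α β) = fun q => metricOf Y' q β α :=
    funext fun q => metric_symm Y' q α β
  rw [h]

lemma christoffel_symm (Y' : (Fin 2 → ℝ) → Fin 3 → ℝ) (p : Fin 2 → ℝ) (μ β δ : Fin 2) :
    christoffel Y' p μ β δ = christoffel Y' p μ δ β := by
  unfold christoffel
  congr 1
  refine Finset.sum_congr rfl fun ν _ => ?_
  rw [pd_metric_symm Y' ν p β δ]
  ring

/-- along a unit-speed geodesic `Z = Y ∘ θ` of the reference surface,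
`2 L[T⊗T⊗T] = d/ds |ż(s)|²` for the convected curve `z = χ ∘ Z`. -/
theorem stmt17 (Y : (Fin 2 → ℝ) → (Fin 3 → ℝ)) (χ : (Fin 3 → ℝ) → (Fin 3 → ℝ))
    (θ : ℝ → (Fin 2 → ℝ))
    (hY : ContDiff ℝ (⊤ : ℕ∞) Y) (hχ : ContDiff ℝ (⊤ : ℕ∞) χ) (hθ : ContDiff ℝ (⊤ : ℕ∞) θ)
    (hχinv : Function.Bijective χ)
    (hG : ∀ p, (metricOf Y p).PosDef)
    (hgeo : ∀ s : ℝ, ∀ μ : Fin 2,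
      deriv (fun t => deriv (fun u => θ u μ) t) s
        + ∑ β : Fin 2, ∑ δ : Fin 2, christoffel Y (θ s) μ β δ
            * deriv (fun u => θ u β) s * deriv (fun u => θ u δ) s = 0)
    (hunit : ∀ s : ℝ, ∑ α : Fin 2, ∑ β : Fin 2,
      metricOf Y (θ s) α β * deriv (fun u => θ u α) s * deriv (fun u => θ u β) s = 1)
    (s₀ : ℝ) :
    2 * ∑ α : Fin 2, ∑ β : Fin 2, ∑ δ : Fin 2,
        Ltensor Y (metricOf (fun p => χ (Y p))) (θ s₀) α β δ
          * deriv (fun u => θ u α) s₀ * deriv (fun u => θ u β) s₀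
          * deriv (fun u => θ u δ) s₀
      = deriv (fun s => ∑ α : Fin 2, ∑ β : Fin 2,
          metricOf (fun p => χ (Y p)) (θ s) α β
            * deriv (fun u => θ u α) s * deriv (fun u => θ u β) s) s₀ := by
  have hYχ : ContDiff ℝ (⊤ : ℕ∞) (fun p => χ (Y p)) := hχ.comp hY
  have hg : ∀ α β : Fin 2,
      ContDiff ℝ (↑(⊤:ℕ∞)) (fun q => metricOf (fun p => χ (Y p)) q α β) :=
    fun α β => contDiff_metric hYχ α β
  have hθd : HasDerivAt θ (deriv θ s₀) s₀ := (hθ.differentiable (by simp) s₀).hasDerivAt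
  have hcomp : ∀ δ : Fin 2, HasDerivAt (fun u => θ u δ) (deriv θ s₀ δ) s₀ :=
    fun δ => (hasDerivAt_pi.mp hθd) δ
  have hcδ : ∀ δ : Fin 2, deriv (fun u => θ u δ) s₀ = deriv θ s₀ δ :=
    fun δ => (hcomp δ).deriv
  have hcf : ∀ α : Fin 2, ContDiff ℝ (↑(⊤:ℕ∞)) (deriv (fun u => θ u α)) :=
    fun α => (contDiff_infty_iff_deriv.mp ((contDiff_pi.mp hθ α).of_le (by simp))).2
  have hcder : ∀ α : Fin 2, HasDerivAt (fun t => deriv (fun u => θ u α) t)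
      (deriv (fun t => deriv (fun u => θ u α) t) s₀) s₀ :=
    fun α => ((hcf α).differentiable (by simp) s₀).hasDerivAt
  have hchain : ∀ α β : Fin 2,
      HasDerivAt (fun s => metricOf (fun p => χ (Y p)) (θ s) α β)
        (∑ δ : Fin 2, pd δ (fun q => metricOf (fun p => χ (Y p)) q α β) (θ s₀)
            * deriv θ s₀ δ) s₀ := by
    intro α β
    have h1 := ((hg α β).differentiable (by simp) (θ s₀)).hasFDerivAt
    have h2 := h1.comp_hasDerivAt s₀ hθd
    refine HasDerivAt.congr_deriv h2 ?_
    have hv : deriv θ s₀ = ∑ δ : Fin 2, deriv θ s₀ δ • (Pi.single δ (1:ℝ) : Fin 2 → ℝ) := by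
      funext j; fin_cases j <;> simp [Fin.sum_univ_two, Pi.single_apply]
    rw [hv]
    simp [pd, Fin.sum_univ_two]
    ring
  have hF : HasDerivAt
      (fun s => ∑ α : Fin 2, ∑ β : Fin 2,
        metricOf (fun p => χ (Y p)) (θ s) α β
          * deriv (fun u => θ u α) s * deriv (fun u => θ u β) s)
      (∑ α : Fin 2, ∑ β : Fin 2,
        (((∑ δ : Fin 2, pd δ (fun q => metricOf (fun p => χ (Y p)) q α β) (θ s₀)
              * deriv θ s₀ δ) * deriv (fun u => θ u α) s₀
          + metricOf (fun p => χ (Y p)) (θ s₀) α β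
              * deriv (fun t => deriv (fun u => θ u α) t) s₀) * deriv (fun u => θ u β) s₀
        + metricOf (fun p => χ (Y p)) (θ s₀) α β * deriv (fun u => θ u α) s₀
            * deriv (fun t => deriv (fun u => θ u β) t) s₀)) s₀ :=
    HasDerivAt.fun_sum fun α _ => HasDerivAt.fun_sum fun β _ =>
      (((hchain α β).fun_mul (hcder α)).fun_mul (hcder β))
  rw [hF.deriv]
  have hC : ∀ μ : Fin 2, deriv (fun t => deriv (fun u => θ u μ) t) s₀
      = -∑ β : Fin 2, ∑ δ : Fin 2, christoffel Y (θ s₀) μ β δ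
          * deriv θ s₀ β * deriv θ s₀ δ := by
    intro μ
    have h := hgeo s₀ μ
    simp only [hcδ] at h
    linarith
  have hgsym : metricOf (fun p => χ (Y p)) (θ s₀) 1 0
      = metricOf (fun p => χ (Y p)) (θ s₀) 0 1 := metric_symm _ _ _ _
  have hpsym : ∀ δ : Fin 2,
      pd δ (fun q => metricOf (fun p => χ (Y p)) q 1 0) (θ s₀)
        = pd δ (fun q => metricOf (fun p => χ (Y p)) q 0 1) (θ s₀) :=
    fun δ => pd_metric_symm _ δ _ 1 0
  have hchsym : ∀ μ : Fin 2, christoffel Y (θ s₀) μ 1 0 = christoffel Y (θ s₀) μ 0 1 :=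
    fun μ => christoffel_symm Y (θ s₀) μ 1 0
  simp only [Ltensor, covDerivMetric, Fin.sum_univ_two, hcδ, hC, hgsym, hpsym, hchsym]
  ring
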